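/- arXiv:1902.01088 — 2 statements merged into one kernel-verified Lean document; each statement's English description precedes it below -/
import Mathlib

section
/- Let A be a Wheeler NFA with Wheeler order <. For every string α ∈ Pref(L(A)), the set I_α = {v : α labels a path from the start state to v} is an interval of (V, <). -/
variable {V : Type*} {A : Type*}

/-- `Reaches E s α v`: the string `α` labels a path in the labeled graph `E`
from the state `s` to the state `v`. -/
inductive Reaches (E : V → A → V → Prop) (s : V) : List A → V → Prop
  | nil : Reaches E s [] s
  | snoc {α : List A} {u w : V} {a : A} :
      Reaches E s α u → E u a w → Reaches E s (α ++ [a]) w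

/-- Co-lexicographic (strict) order on strings: lexicographic order of reverses. -/
def ColexLt [LinearOrder A] (α β : List A) : Prop :=
  List.Lex (· < ·) α.reverse β.reverse

/-- `r` is a strict total order. -/
def StrictTotal (r : V → V → Prop) : Prop :=
  (∀ x, ¬ r x x) ∧ (∀ x y z, r x y → r y z → r x z) ∧
  (∀ x y : V, x ≠ y → r x y ∨ r y x)

/-- `r` is a Wheeler order for the labeled graph `E`: a strict total order on states
such that in-degree-0 states precede all states with positive in-degree, edges with
strictly smaller labels point to strictly smaller states, and equally-labeled edges
from ordered sources point to weakly ordered targets. -/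
def WheelerRel [LinearOrder A] (E : V → A → V → Prop) (r : V → V → Prop) : Prop :=
  StrictTotal r ∧
  (∀ x w : V, (∀ u a, ¬ E u a x) → (∃ u a, E u a w) → r x w) ∧
  (∀ u₁ a₁ v₁ u₂ a₂ v₂, E u₁ a₁ v₁ → E u₂ a₂ v₂ → a₁ < a₂ → r v₁ v₂) ∧
  (∀ u₁ v₁ u₂ v₂ a, E u₁ a v₁ → E u₂ a v₂ → r u₁ u₂ → r v₁ v₂ ∨ v₁ = v₂)

/-- The language accepted by the automaton `(V, E, F, s)`. -/
def Lang (E : V → A → V → Prop) (F : Set V) (s : V) : Set (List A) :=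
  {α | ∃ w ∈ F, Reaches E s α w}

/-- `Pref(L(A))`: the set of prefixes of accepted strings. -/
def PrefL (E : V → A → V → Prop) (F : Set V) (s : V) : Set (List A) :=
  {α | ∃ β, α ++ β ∈ Lang E F s}

/-- `I_u`: the strings in `Pref(L(A))` labeling a path from `s` to `u`. -/
def Iset (E : V → A → V → Prop) (F : Set V) (s u : V) : Set (List A) :=
  {α | α ∈ PrefL E F s ∧ Reaches E s α u}

/-- `I_α`: the set of states reached from `s` by a path labeled `α`. -/
def Istr (E : V → A → V → Prop) (s : V) (α : List A) : Set V :=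
  {w | Reaches E s α w}

lemma reaches_inv {V A : Type*} {E : V → A → V → Prop} {s v : V} {l : List A}
    (h : Reaches E s l v) :
    (l = [] ∧ v = s) ∨ ∃ β a u, l = β ++ [a] ∧ Reaches E s β u ∧ E u a v := by
  cases h with
  | nil => exact Or.inl ⟨rfl, rfl⟩
  | snoc h e => exact Or.inr ⟨_, _, _, rfl, h, e⟩

lemma reaches_nil_eq {V A : Type*} {E : V → A → V → Prop} {s v : V}
    (h : Reaches E s [] v) : v = s := by
  rcases reaches_inv h with ⟨_, rfl⟩ | ⟨β, a, u, hl, _⟩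
  · rfl
  · exact absurd hl.symm (by simp)

lemma reaches_snoc_inv {V A : Type*} {E : V → A → V → Prop} {s v : V} {β : List A} {a : A}
    (h : Reaches E s (β ++ [a]) v) : ∃ u, Reaches E s β u ∧ E u a v := by
  rcases reaches_inv h with ⟨hl, _⟩ | ⟨β', a', u, hl, hr, he⟩
  · exact absurd hl (by simp)
  · obtain ⟨h1, h2⟩ := List.append_inj' hl.symm rfl
    obtain rfl := h1
    obtain rfl : a' = a := by simpa using h2
    exact ⟨u, hr, he⟩

/-- In a Wheeler NFA with Wheeler order `r`, for every `α ∈ Pref(L(A))` the set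
`I_α = {v : α labels a path s ⇝ v}` is an interval (convex set) of `(V, r)`. -/
theorem stmt8 {V A : Type*} [LinearOrder A]
    (E : V → A → V → Prop) (F : Set V) (s : V) (r : V → V → Prop)
    (hsrc : ∀ u a, ¬ E u a s)
    (hsuniq : ∀ x : V, (∀ u a, ¬ E u a x) → x = s)
    (hreach : ∀ x : V, ∃ α, Reaches E s α x)
    (hW : WheelerRel E r)
    (α : List A) (hα : α ∈ PrefL E F s) :
    ∀ u ∈ Istr E s α, ∀ w ∈ Istr E s α, ∀ y, r u y → r y w → y ∈ Istr E s α := by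
  clear hα
  obtain ⟨⟨hirr, htrans, htot⟩, hmin, hlab, hmono⟩ := hW
  induction α using List.reverseRecOn with
  | nil =>
    intro u hu w hw y huy hyw
    have h1 := reaches_nil_eq hu
    have h2 := reaches_nil_eq hw
    rw [h1] at huy; rw [h2] at hyw
    exact absurd (htrans _ _ _ huy hyw) (hirr s)
  | append_singleton β a ih =>
    intro u hu w hw y huy hyw
    obtain ⟨u', hu', eu⟩ := reaches_snoc_inv hu
    obtain ⟨w', hw', ew⟩ := reaches_snoc_inv hw
    by_cases hy : ∀ p b, ¬ E p b y
    · have hys := hsuniq y hy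
      rw [hys] at huy
      have hsu : r s u := hmin s u hsrc ⟨u', a, eu⟩
      exact absurd (htrans _ _ _ hsu huy) (hirr s)
    · push_neg at hy
      obtain ⟨z, b, ezy⟩ := hy
      have hba : b = a := by
        rcases lt_trichotomy b a with h | h | h
        · exact absurd (htrans _ _ _ (hlab _ _ _ _ _ _ ezy eu h) huy) (hirr y)
        · exact h
        · exact absurd (htrans _ _ _ hyw (hlab _ _ _ _ _ _ ew ezy h)) (hirr y)
      subst hba
      by_cases hz1 : z = u'
      · subst hz1; exact Reaches.snoc hu' ezy
      rcases htot z u' hz1 with h | h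
      · rcases hmono z y u' u b ezy eu h with h2 | h2
        · exact absurd (htrans _ _ _ h2 huy) (hirr y)
        · exact h2 ▸ hu
      by_cases hz2 : z = w'
      · subst hz2; exact Reaches.snoc hw' ezy
      rcases htot z w' hz2 with h3 | h3
      · exact Reaches.snoc (ih u' hu' w' hw' z h h3) ezy
      · rcases hmono w' w z y b ew ezy h3 with h4 | h4
        · exact absurd (htrans _ _ _ hyw h4) (hirr y)
        · exact h4 ▸ hw
end

section
/- Every Wheeler NFA with n states over alphabet Σ admits an equivalent Wheeler DFA with at most 2n - 1 - |Σ| states recognizing the same language. The DFA is obtained by the interval construction: its states are the sets I_α = {v : α labels a path s⇝v} for α ∈ Pref(L(A)), with transition (I_α, I_{αe}, e) for each e ∈ Σ with αe ∈ Pref(L(A)), initial state I_ε = {s}, and accepting states those I_α with α ∈ L(A). -/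
variable {V : Type*} {A : Type*}

/-- States of the interval determinization: the sets `I_α` for `α ∈ Pref(L(A))`. -/
def DetStates (E : V → A → V → Prop) (F : Set V) (s : V) : Set (Set V) :=
  {S | ∃ α ∈ PrefL E F s, S = Istr E s α}

/-- Edges of the interval determinization: `(I_α, I_{αe}, e)` for `αe ∈ Pref(L(A))`. -/
def DetEdge (E : V → A → V → Prop) (F : Set V) (s : V) :
    Set V → A → Set V → Prop :=
  fun S e T => ∃ α, α ∈ PrefL E F s ∧ (α ++ [e]) ∈ PrefL E F s ∧
    S = Istr E s α ∧ T = Istr E s (α ++ [e])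


/-!
Read strings co-lexicographically. The Wheeler axioms, applied along two paths from `s`
backwards, show that if `α` precedes `β` then every state reached by `α` but not by `β`
lies below every state reached by `β`, and every state reached by `β` but not by `α` lies
above every state reached by `α`: the sets `I_α` behave like intervals. Two distinct such
sets therefore have distinct sums of the ranks of their least and greatest states, and this
sum grows along the co-lexicographic order.

Hence ordering the sets `I_α` by their incoming letter, then by this endpoint sum, is a
Wheeler order of the determinization. For the size bound, the nonempty sets `I_{γa}` all
lie in the `m_a` states with incoming letter `a`, and their endpoint sums, taken with ranks
among those states, are distinct numbers in `[0, 2m_a - 2]`; so there are at most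
`2m_a - 1` of them. Summing over the letters (`Σ m_a ≤ n - 1`, `m_a ≥ 1`) and adding
`I_ε = {s}` gives `2n - 1 - |Σ|`.
-/

section Reaches

variable {E : V → A → V → Prop} {s : V}

lemma reaches_nil_iff {w : V} : Reaches E s [] w ↔ w = s := by
  refine ⟨fun h => ?_, fun h => h ▸ .nil⟩
  generalize hγ : ([] : List A) = γ at h
  cases h with
  | nil => rfl
  | snoc => simp at hγ

lemma reaches_append_singleton_iff {α : List A} {a : A} {w : V} :
    Reaches E s (α ++ [a]) w ↔ ∃ u, Reaches E s α u ∧ E u a w := by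
  refine ⟨fun h => ?_, fun ⟨u, hu, huw⟩ => hu.snoc huw⟩
  generalize hγ : α ++ [a] = γ at h
  cases h with
  | nil => simp at hγ
  | snoc hu huw =>
    obtain ⟨rfl, h⟩ := List.append_inj' hγ rfl
    obtain rfl : a = _ := List.singleton_inj.mp h
    exact ⟨_, hu, huw⟩

lemma Reaches.exists_of_append {α β : List A} {w : V} (h : Reaches E s (α ++ β) w) :
    ∃ u, Reaches E s α u := by
  induction β using List.reverseRecOn generalizing w with
  | nil => exact ⟨w, by simpa using h⟩
  | append_singleton β b ih =>
    rw [← List.append_assoc, reaches_append_singleton_iff] at h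
    obtain ⟨u, hu, -⟩ := h
    exact ih hu

lemma Istr_append_singleton_congr {α β : List A} (a : A) (h : Istr E s α = Istr E s β) :
    Istr E s (α ++ [a]) = Istr E s (β ++ [a]) := by
  ext w
  change Reaches E s _ w ↔ Reaches E s _ w
  simp only [reaches_append_singleton_iff]
  exact exists_congr fun u => and_congr_left' (Set.ext_iff.mp h u)

variable {F : Set V}

lemma mem_PrefL_of_append_singleton {α : List A} {a : A} (h : α ++ [a] ∈ PrefL E F s) :
    α ∈ PrefL E F s := by
  obtain ⟨β, hβ⟩ := h
  exact ⟨[a] ++ β, by rwa [← List.append_assoc]⟩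

lemma Istr_nonempty_of_mem_PrefL {α : List A} (h : α ∈ PrefL E F s) :
    (Istr E s α).Nonempty := by
  obtain ⟨β, w, -, hw⟩ := h
  exact hw.exists_of_append

end Reaches

section Colex

variable [LinearOrder A]

lemma colexLt_or_colexLt_of_ne {α β : List A} (h : α ≠ β) :
    ColexLt α β ∨ ColexLt β α := by
  by_contra! hc
  exact h (List.reverse_injective (Std.Trichotomous.trichotomous _ _ hc.1 hc.2))

lemma colexLt_append_singleton_iff {α β : List A} {a b : A} :
    ColexLt (α ++ [a]) (β ++ [b]) ↔ a < b ∨ a = b ∧ ColexLt α β := by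
  simp only [ColexLt, List.reverse_append, List.reverse_singleton, List.singleton_append]
  constructor
  · intro h
    cases h with
    | cons h => exact .inr ⟨rfl, h⟩
    | rel h => exact .inl h
  · rintro (h | ⟨rfl, h⟩)
    · exact .rel h
    · exact .cons h

lemma not_colexLt_nil {α : List A} : ¬ ColexLt α [] := List.not_lex_nil

end Colex

/-- `S` lies before `T` as if both were intervals of the order `r`. -/
def Precedes (r : V → V → Prop) (S T : Set V) : Prop :=
  (∀ u ∈ S, u ∉ T → ∀ v ∈ T, r u v) ∧ (∀ u ∈ S, ∀ v ∈ T, v ∉ S → r u v)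

section Wheeler

variable [LinearOrder A] {E : V → A → V → Prop} {r : V → V → Prop} {s : V}

lemma WheelerRel.label_eq (hW : WheelerRel E r) {u u' v : V} {a b : A}
    (ha : E u a v) (hb : E u' b v) : a = b := by
  by_contra hab
  rcases lt_or_gt_of_ne hab with h | h
  · exact hW.1.1 v (hW.2.2.1 _ _ _ _ _ _ ha hb h)
  · exact hW.1.1 v (hW.2.2.1 _ _ _ _ _ _ hb ha h)

lemma WheelerRel.lt_or_reaches_swap_of_lex (hW : WheelerRel E r) (hsrc : ∀ u a, ¬ E u a s)
    {ρ σ : List A} (h : List.Lex (· < ·) ρ σ) {u v : V}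
    (hu : Reaches E s ρ.reverse u) (hv : Reaches E s σ.reverse v) :
    r u v ∨ Reaches E s σ.reverse u ∧ Reaches E s ρ.reverse v := by
  induction h generalizing u v with
  | nil =>
    rw [List.reverse_nil, reaches_nil_iff] at hu
    rw [List.reverse_cons, reaches_append_singleton_iff] at hv
    obtain ⟨_, -, hE⟩ := hv
    exact .inl (hu ▸ hW.2.1 _ _ hsrc ⟨_, _, hE⟩)
  | rel hab =>
    simp only [List.reverse_cons, reaches_append_singleton_iff] at hu hv
    obtain ⟨_, -, hEu⟩ := hu
    obtain ⟨_, -, hEv⟩ := hv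
    exact .inl (hW.2.2.1 _ _ _ _ _ _ hEu hEv hab)
  | cons _ ih =>
    simp only [List.reverse_cons, reaches_append_singleton_iff] at hu hv ⊢
    obtain ⟨u', hu', hEu⟩ := hu
    obtain ⟨v', hv', hEv⟩ := hv
    rcases ih hu' hv' with h | ⟨hu'σ, hv'ρ⟩
    · rcases hW.2.2.2 _ _ _ _ _ hEu hEv h with h | rfl
      · exact .inl h
      · exact .inr ⟨⟨v', hv', hEv⟩, ⟨u', hu', hEu⟩⟩
    · exact .inr ⟨⟨u', hu'σ, hEu⟩, ⟨v', hv'ρ, hEv⟩⟩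

lemma WheelerRel.precedes_Istr (hW : WheelerRel E r) (hsrc : ∀ u a, ¬ E u a s)
    {α β : List A} (h : ColexLt α β) : Precedes r (Istr E s α) (Istr E s β) := by
  have key {u v : V} (hu : u ∈ Istr E s α) (hv : v ∈ Istr E s β) :
      r u v ∨ u ∈ Istr E s β ∧ v ∈ Istr E s α := by
    have := hW.lt_or_reaches_swap_of_lex hsrc h (u := u) (v := v)
    rw [List.reverse_reverse, List.reverse_reverse] at this
    exact this hu hv
  exact ⟨fun u hu huβ v hv => (key hu hv).resolve_right (huβ ·.1),
    fun u hu v hv hvα => (key hu hv).resolve_right (hvα ·.2)⟩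

end Wheeler

section Rank

variable {r : V → V → Prop}

noncomputable def rank (r : V → V → Prop) (W : Set V) (v : V) : ℕ :=
  {u | u ∈ W ∧ r u v}.ncard

variable [Finite V] {W : Set V}

lemma rank_lt_rank (hr : StrictTotal r) {u v : V} (hu : u ∈ W) (huv : r u v) :
    rank r W u < rank r W v := by
  refine Set.ncard_lt_ncard ⟨fun x hx => ⟨hx.1, hr.2.1 _ _ _ hx.2 huv⟩, fun hsub => ?_⟩
  exact hr.1 u (hsub ⟨hu, huv⟩).2

lemma rank_lt_ncard (hr : StrictTotal r) {v : V} (hv : v ∈ W) : rank r W v < W.ncard :=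
  Set.ncard_lt_ncard ⟨fun _ hx => hx.1, fun hsub => hr.1 v (hsub hv).2⟩

noncomputable def endpointSum (r : V → V → Prop) (W S : Set V) : ℕ :=
  sInf (rank r W '' S) + sSup (rank r W '' S)

lemma endpointSum_lt_of_precedes (hr : StrictTotal r) {S T : Set V} (hS : S ⊆ W)
    (hSne : S.Nonempty) (hTne : T.Nonempty) (hST : Precedes r S T) (hne : S ≠ T) :
    endpointSum r W S < endpointSum r W T := by
  obtain ⟨t₀, ht₀, hmin⟩ := Nat.sInf_mem (hTne.image (rank r W))
  obtain ⟨s₁, hs₁, hmax⟩ := (hSne.image (rank r W)).csSup_mem (Set.toFinite _)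
  have inf_le {x : V} (hx : x ∈ S) : sInf (rank r W '' S) ≤ rank r W x :=
    Nat.sInf_le ⟨x, hx, rfl⟩
  have le_sup {y : V} (hy : y ∈ T) : rank r W y ≤ sSup (rank r W '' T) :=
    le_csSup (Set.toFinite _).bddAbove ⟨y, hy, rfl⟩
  have hinf : sInf (rank r W '' S) ≤ sInf (rank r W '' T) := by
    by_cases ht₀S : t₀ ∈ S
    · exact hmin ▸ inf_le ht₀S
    · obtain ⟨x, hx⟩ := hSne
      have := rank_lt_rank hr (hS hx) (hST.2 x hx t₀ ht₀ ht₀S)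
      have := inf_le hx
      omega
  have hsup : sSup (rank r W '' S) ≤ sSup (rank r W '' T) := by
    by_cases hs₁T : s₁ ∈ T
    · exact hmax ▸ le_sup hs₁T
    · obtain ⟨y, hy⟩ := hTne
      have := rank_lt_rank hr (hS hs₁) (hST.1 s₁ hs₁ hs₁T y hy)
      have := le_sup hy
      omega
  obtain ⟨w, ⟨hwS, hwT⟩ | ⟨hwT, hwS⟩⟩ := Set.symmDiff_nonempty.mpr hne
  · have := rank_lt_rank hr (hS hwS) (hST.1 w hwS hwT t₀ ht₀)
    have := inf_le hwS
    unfold endpointSum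
    omega
  · have := rank_lt_rank hr (hS hs₁) (hST.2 s₁ hs₁ w hwT hwS)
    have := le_sup hwT
    unfold endpointSum
    omega

lemma ncard_le_of_pairwise_precedes (hr : StrictTotal r) {𝓕 : Set (Set V)}
    (hne : ∀ S ∈ 𝓕, S.Nonempty) (hsub : ∀ S ∈ 𝓕, S ⊆ W)
    (hcmp : 𝓕.Pairwise fun S T => Precedes r S T ∨ Precedes r T S) :
    𝓕.ncard ≤ 2 * W.ncard - 1 := by
  have hrange (S : Set V) (hS : S ∈ 𝓕) : endpointSum r W S ∈ Set.Iio (2 * W.ncard - 1) := by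
    obtain ⟨x, hx, hmin⟩ := Nat.sInf_mem ((hne S hS).image (rank r W))
    obtain ⟨y, hy, hmax⟩ := ((hne S hS).image (rank r W)).csSup_mem (Set.toFinite _)
    have := rank_lt_ncard hr (hsub S hS hx)
    have := rank_lt_ncard hr (hsub S hS hy)
    simp only [Set.mem_Iio, endpointSum]
    omega
  have hinj : Set.InjOn (endpointSum r W) 𝓕 := by
    intro S hS T hT heq
    by_contra hST
    rcases hcmp hS hT hST with h | h
    · exact (endpointSum_lt_of_precedes hr (hsub S hS) (hne S hS) (hne T hT) h hST).ne heq
    · exact (endpointSum_lt_of_precedes hr (hsub T hT) (hne T hT) (hne S hS) h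
        (Ne.symm hST)).ne heq.symm
  simpa using Set.ncard_le_ncard_of_injOn _ hrange hinj (Set.finite_Iio _)

end Rank

section Determinization

variable {E : V → A → V → Prop} {F : Set V} {s : V} {r : V → V → Prop}

lemma detEdge_append_singleton {α : List A} {a : A} (h : α ++ [a] ∈ PrefL E F s) :
    DetEdge E F s (Istr E s α) a (Istr E s (α ++ [a])) :=
  ⟨α, mem_PrefL_of_append_singleton h, h, rfl, rfl⟩

lemma detEdge_deterministic {S T T' : Set V} {a : A}
    (h : DetEdge E F s S a T) (h' : DetEdge E F s S a T') : T = T' := by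
  obtain ⟨α, -, -, rfl, rfl⟩ := h
  obtain ⟨β, -, -, hαβ, rfl⟩ := h'
  exact Istr_append_singleton_congr a hαβ

open Classical in
noncomputable def detLabel (E : V → A → V → Prop) (F : Set V) (s : V) (T : Set V) :
    WithBot A :=
  if h : ∃ a S, DetEdge E F s S a T then h.choose else ⊥

lemma detLabel_eq_bot {T : Set V} (h : ∀ S a, ¬ DetEdge E F s S a T) :
    detLabel E F s T = ⊥ := by
  rw [detLabel, dif_neg]
  rintro ⟨a, S, hS⟩
  exact h S a hS

lemma detLabel_Istr_nil (hsrc : ∀ u a, ¬ E u a s) : detLabel E F s (Istr E s []) = ⊥ := by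
  refine detLabel_eq_bot ?_
  rintro S a ⟨α, -, -, -, hα⟩
  have hs : s ∈ Istr E s (α ++ [a]) := hα ▸ (Reaches.nil : s ∈ Istr E s [])
  obtain ⟨u, -, hE⟩ := reaches_append_singleton_iff.mp hs
  exact hsrc u a hE

/-- The last component only breaks ties, making the key injective. -/
noncomputable def detKey [Finite V] (E : V → A → V → Prop) (F : Set V) (s : V)
    (r : V → V → Prop) (T : Set V) : WithBot A ×ₗ ℕ ×ₗ Fin (Nat.card (Set V)) :=
  toLex (detLabel E F s T, toLex (endpointSum r Set.univ T, Finite.equivFin (Set V) T))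

lemma detKey_injective [Finite V] : Function.Injective (detKey E F s r) := by
  intro S T h
  simp only [detKey, toLex_inj, Prod.mk.injEq] at h
  exact (Finite.equivFin _).injective h.2.2

lemma detStates_subset :
    DetStates E F s ⊆ insert (Istr E s []) (⋃ a, {T | ∃ S, DetEdge E F s S a T}) := by
  rintro _ ⟨α, hα, rfl⟩
  obtain rfl | ⟨γ, a, rfl⟩ := α.eq_nil_or_concat'
  · exact Set.mem_insert _ _
  · exact Set.mem_insert_of_mem _ (Set.mem_iUnion.mpr ⟨a, _, detEdge_append_singleton hα⟩)

lemma mem_Lang_iff {α : List A} :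
    (α ∈ PrefL E F s ∧ ∃ β ∈ Lang E F s, Istr E s α = Istr E s β) ↔ α ∈ Lang E F s := by
  constructor
  · rintro ⟨-, β, ⟨w, hwF, hw⟩, hαβ⟩
    have hw : w ∈ Istr E s α := hαβ ▸ hw
    exact ⟨w, hwF, hw⟩
  · exact fun hα => ⟨⟨[], by simpa using hα⟩, α, hα, rfl⟩

variable [LinearOrder A]

lemma WheelerRel.detEdge_label_eq (hW : WheelerRel E r) {S S' T : Set V} {a b : A}
    (ha : DetEdge E F s S a T) (hb : DetEdge E F s S' b T) : a = b := by
  obtain ⟨α, -, hα, -, rfl⟩ := ha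
  obtain ⟨β, -, -, -, hβ⟩ := hb
  obtain ⟨v, hv⟩ := Istr_nonempty_of_mem_PrefL hα
  have hv' : v ∈ Istr E s (β ++ [b]) := hβ ▸ hv
  obtain ⟨_, -, hEa⟩ := reaches_append_singleton_iff.mp hv
  obtain ⟨_, -, hEb⟩ := reaches_append_singleton_iff.mp hv'
  exact hW.label_eq hEa hEb

lemma WheelerRel.detLabel_eq (hW : WheelerRel E r) {S T : Set V} {a : A}
    (h : DetEdge E F s S a T) : detLabel E F s T = a := by
  have hex : ∃ a S, DetEdge E F s S a T := ⟨a, S, h⟩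
  obtain ⟨S', h'⟩ := hex.choose_spec
  rw [detLabel, dif_pos hex, hW.detEdge_label_eq h' h]

lemma WheelerRel.detKey_lt_of_colexLt [Finite V] (hW : WheelerRel E r)
    (hsrc : ∀ u a, ¬ E u a s) {γ δ : List A}
    (hγ : γ ∈ PrefL E F s) (hδ : δ ∈ PrefL E F s)
    (hγδ : ColexLt γ δ) (hne : Istr E s γ ≠ Istr E s δ) :
    detKey E F s r (Istr E s γ) < detKey E F s r (Istr E s δ) := by
  obtain rfl | ⟨δ, d, rfl⟩ := δ.eq_nil_or_concat'
  · exact absurd hγδ not_colexLt_nil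
  have hd := hW.detLabel_eq (detEdge_append_singleton hδ)
  obtain rfl | ⟨γ, c, rfl⟩ := γ.eq_nil_or_concat'
  · simp [detKey, Prod.Lex.toLex_lt_toLex, detLabel_Istr_nil hsrc, hd]
  have hc := hW.detLabel_eq (detEdge_append_singleton hγ)
  rcases colexLt_append_singleton_iff.mp hγδ with hcd | ⟨rfl, -⟩
  · simp [detKey, Prod.Lex.toLex_lt_toLex, hc, hd, hcd]
  · have := endpointSum_lt_of_precedes hW.1 (Set.subset_univ _) (Istr_nonempty_of_mem_PrefL hγ)
      (Istr_nonempty_of_mem_PrefL hδ) (hW.precedes_Istr hsrc hγδ) hne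
    simp [detKey, Prod.Lex.toLex_lt_toLex, hc, hd, this]

lemma WheelerRel.detEdge [Finite V] (hW : WheelerRel E r) (hsrc : ∀ u a, ¬ E u a s) :
    WheelerRel (DetEdge E F s) fun S T => detKey E F s r S < detKey E F s r T := by
  refine ⟨⟨fun _ => lt_irrefl _, fun _ _ _ => lt_trans,
    fun _ _ hST => lt_or_gt_of_ne (detKey_injective.ne hST)⟩, ?_, ?_, ?_⟩
  · rintro X T hX ⟨S, a, hT⟩
    simp [detKey, Prod.Lex.toLex_lt_toLex, detLabel_eq_bot hX, hW.detLabel_eq hT]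
  · intro S₁ a₁ T₁ S₂ a₂ T₂ h₁ h₂ ha
    simp [detKey, Prod.Lex.toLex_lt_toLex, hW.detLabel_eq h₁, hW.detLabel_eq h₂, ha]
  · rintro _ T₁ _ T₂ a ⟨α, hα, hαa, rfl, rfl⟩ ⟨β, hβ, hβa, rfl, rfl⟩ hαβ
    by_cases hT : Istr E s (α ++ [a]) = Istr E s (β ++ [a])
    · exact .inr hT
    have hI : Istr E s α ≠ Istr E s β := fun h => hT (Istr_append_singleton_congr a h)
    rcases colexLt_or_colexLt_of_ne (ne_of_apply_ne _ hI) with h | h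
    · exact .inl (hW.detKey_lt_of_colexLt hsrc hαa hβa
        (colexLt_append_singleton_iff.mpr (.inr ⟨rfl, h⟩)) hT)
    · exact absurd hαβ (hW.detKey_lt_of_colexLt hsrc hβ hα h hI.symm).asymm

lemma WheelerRel.ncard_detTargets_le [Finite V] (hW : WheelerRel E r) (hsrc : ∀ u a, ¬ E u a s)
    (a : A) : {T | ∃ S, DetEdge E F s S a T}.ncard ≤ 2 * {v | ∃ u, E u a v}.ncard - 1 := by
  refine ncard_le_of_pairwise_precedes hW.1 ?_ ?_ ?_
  · rintro _ ⟨S, α, -, hα, -, rfl⟩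
    exact Istr_nonempty_of_mem_PrefL hα
  · rintro _ ⟨S, α, -, -, -, rfl⟩ v hv
    obtain ⟨u, -, hE⟩ := reaches_append_singleton_iff.mp hv
    exact ⟨u, hE⟩
  · rintro _ ⟨S, α, -, -, -, rfl⟩ _ ⟨S', β, -, -, -, rfl⟩ hne
    rcases colexLt_or_colexLt_of_ne (ne_of_apply_ne (Istr E s) hne) with h | h
    · exact .inl (hW.precedes_Istr hsrc h)
    · exact .inr (hW.precedes_Istr hsrc h)

lemma WheelerRel.sum_ncard_targets_le [Fintype V] [Fintype A] (hW : WheelerRel E r)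
    (hsrc : ∀ u a, ¬ E u a s) :
    ∑ a : A, {v | ∃ u, E u a v}.ncard ≤ Fintype.card V - 1 := by
  have hdisj : Pairwise fun a b : A => Disjoint {v | ∃ u, E u a v} {v | ∃ u, E u b v} :=
    fun a b hab => Set.disjoint_left.mpr fun _ ⟨_, ha⟩ ⟨_, hb⟩ => hab (hW.label_eq ha hb)
  have hssub : (⋃ a : A, {v | ∃ u, E u a v}) ⊂ Set.univ := by
    refine Set.ssubset_univ_iff.mpr fun h => ?_
    obtain ⟨a, u, hE⟩ := Set.mem_iUnion.mp (h ▸ Set.mem_univ s)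
    exact hsrc u a hE
  have := Set.ncard_lt_ncard hssub
  rw [Set.ncard_iUnion_of_finite (fun _ => Set.toFinite _) hdisj, finsum_eq_sum_of_fintype,
    Set.ncard_univ, Nat.card_eq_fintype_card] at this
  omega

lemma WheelerRel.ncard_detStates_le [Fintype V] [Fintype A] (hW : WheelerRel E r)
    (hsrc : ∀ u a, ¬ E u a s) (hocc : ∀ a : A, ∃ u w, E u a w) :
    (DetStates E F s).ncard ≤ 2 * Fintype.card V - 1 - Fintype.card A := by
  have hpos (a : A) : 1 ≤ {v | ∃ u, E u a v}.ncard := by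
    obtain ⟨u, w, hE⟩ := hocc a
    exact (Set.ncard_pos (Set.toFinite _)).mpr ⟨w, u, hE⟩
  have hsum : ∑ a : A, ({T | ∃ S, DetEdge E F s S a T}.ncard + 1) ≤
      2 * ∑ a : A, {v | ∃ u, E u a v}.ncard := by
    rw [Finset.mul_sum]
    refine Finset.sum_le_sum fun a _ => ?_
    have := hW.ncard_detTargets_le (F := F) hsrc a
    have := hpos a
    omega
  rw [Finset.sum_add_distrib, Finset.sum_const, Finset.card_univ, smul_eq_mul, mul_one] at hsum
  have := hW.sum_ncard_targets_le hsrc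
  have : 0 < Fintype.card V := Fintype.card_pos_iff.mpr ⟨s⟩
  calc (DetStates E F s).ncard
      ≤ (insert (Istr E s []) (⋃ a, {T | ∃ S, DetEdge E F s S a T})).ncard :=
        Set.ncard_le_ncard detStates_subset (Set.toFinite _)
    _ ≤ (⋃ a, {T | ∃ S, DetEdge E F s S a T}).ncard + 1 := Set.ncard_insert_le _ _
    _ ≤ ∑ a : A, {T | ∃ S, DetEdge E F s S a T}.ncard + 1 := by
        gcongr
        exact Set.ncard_iUnion_le_of_fintype _
    _ ≤ 2 * Fintype.card V - 1 - Fintype.card A := by omega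

end Determinization

theorem stmt9_general {V A : Type*} [Fintype V] [Fintype A] [LinearOrder A]
    (E : V → A → V → Prop) (F : Set V) (s : V) (r : V → V → Prop)
    (hsrc : ∀ u a, ¬ E u a s)
    (hW : WheelerRel E r)
    (hocc : ∀ a : A, ∃ u w, E u a w) :
    -- size bound: at most 2n - 1 - |Σ| states
    ((DetStates E F s).Finite ∧
      (DetStates E F s).ncard ≤ 2 * Fintype.card V - 1 - Fintype.card A) ∧
    -- the construction is deterministic
    (∀ S e T T', DetEdge E F s S e T → DetEdge E F s S e T' → T = T') ∧
    -- it recognizes the same language: a string is accepted by the determinization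
    -- (it labels a path from I_ε ending in an accepting state I_β, β ∈ L(A))
    -- iff it belongs to L(A)
    (∀ α : List A,
      (α ∈ PrefL E F s ∧ ∃ β ∈ Lang E F s, Istr E s α = Istr E s β) ↔
        α ∈ Lang E F s) ∧
    -- and it is Wheeler
    (∃ r' : Set V → Set V → Prop, WheelerRel (DetEdge E F s) r') :=
  ⟨⟨Set.toFinite _, hW.ncard_detStates_le hsrc hocc⟩, fun _ _ _ _ => detEdge_deterministic,
    fun _ => mem_Lang_iff, ⟨_, hW.detEdge hsrc⟩⟩

/-- Determinization of a Wheeler NFA: a Wheeler NFA with `n` states over alphabet `Σ`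
(in which every letter occurs) admits, via the interval construction, an equivalent
Wheeler DFA with at most `2n - 1 - |Σ|` states. -/
theorem stmt9 {V A : Type*} [Fintype V] [Fintype A] [LinearOrder A]
    (E : V → A → V → Prop) (F : Set V) (s : V) (r : V → V → Prop)
    (hsrc : ∀ u a, ¬ E u a s)
    (hsuniq : ∀ x : V, (∀ u a, ¬ E u a x) → x = s)
    (hreach : ∀ x : V, ∃ α, Reaches E s α x)
    (hW : WheelerRel E r)
    (hocc : ∀ a : A, ∃ u w, E u a w) :
    -- size bound: at most 2n - 1 - |Σ| states
    ((DetStates E F s).Finite ∧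
      (DetStates E F s).ncard ≤ 2 * Fintype.card V - 1 - Fintype.card A) ∧
    -- the construction is deterministic
    (∀ S e T T', DetEdge E F s S e T → DetEdge E F s S e T' → T = T') ∧
    -- it recognizes the same language: a string is accepted by the determinization
    -- (it labels a path from I_ε ending in an accepting state I_β, β ∈ L(A))
    -- iff it belongs to L(A)
    (∀ α : List A,
      (α ∈ PrefL E F s ∧ ∃ β ∈ Lang E F s, Istr E s α = Istr E s β) ↔
        α ∈ Lang E F s) ∧
    -- and it is Wheeler
    (∃ r' : Set V → Set V → Prop, WheelerRel (DetEdge E F s) r') :=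
  stmt9_general E F s r hsrc hW hocc
end
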